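/- Let g be a multiplicative read-once polynomial over a field F with variable set V of size n ≥ 1, where every leaf of the formula computes a polynomial of the form a·xi with a ≠ 0 (i.e., each leaf's affine form vanishes only at xi = 0). Then for any variable xn ∈ V, the restriction g|_{xn=0} minus its constant term has total degree at most n − 2 (setting xn = 0 reduces the degree of g by at least 2) whenever n ≥ 2. -/

import Mathlib

/-!
At an internal node `a * (f * g) + b` with `xₙ` a variable of `f`, setting `xₙ = 0` leaves `g`
untouched, so the restriction is `a * (A * g) + b` with `A = f|_{xₙ=0}`. Up to constants,
`A * g - A₀ g₀ = A₀ (g - g₀) + (A - A₀) g`. If `f` is a leaf then `A = 0`; otherwise `f` has at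
least two variables and induction bounds `deg (A - A₀)` by `|vars f| - 2`, while
`deg g ≤ |vars g|` because a read-once product has degree at most its number of variables.
-/

open MvPolynomial

/-- Substitute the constant `a` for variable `i`. -/
noncomputable def rst {F : Type*} [Field F] {n : ℕ} (i : Fin n) (a : F)
    (p : MvPolynomial (Fin n) F) : MvPolynomial (Fin n) F :=
  aeval (fun k : Fin n => if k = i then (C a : MvPolynomial (Fin n) F) else X k) p

/-- Partial derivative of a multilinear polynomial: p|_{xi=1} - p|_{xi=0}. -/
noncomputable def pder {F : Type*} [Field F] {n : ℕ} (i : Fin n)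
    (p : MvPolynomial (Fin n) F) : MvPolynomial (Fin n) F :=
  rst i 1 p - rst i 0 p

/-- Multiplicative read-once polynomials whose leaves are homogeneous linear forms `a * xi`, `a ≠ 0`. -/
inductive IsMulROP0 {F : Type*} [Field F] {n : ℕ} : MvPolynomial (Fin n) F → Prop
  | leaf (a : F) (ha : a ≠ 0) (i : Fin n) : IsMulROP0 (C a * X i)
  | mul (a b : F) (ha : a ≠ 0) {f g : MvPolynomial (Fin n) F} (hdisj : Disjoint f.vars g.vars)
      (hf : IsMulROP0 f) (hg : IsMulROP0 g) : IsMulROP0 (C a * (f * g) + C b)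

namespace MvPolynomial

section CommSemiring

variable {R σ : Type*} [CommSemiring R]

theorem vars_add_C (p : MvPolynomial σ R) (b : R) : (p + C b).vars = p.vars := by
  classical
  ext i
  simp only [mem_vars_iff_mem_support, mem_support_iff]
  refine exists_congr fun d => and_congr_left fun hi => ?_
  rw [coeff_add, coeff_C, if_neg (by rintro rfl; simp at hi), add_zero]

theorem vars_mul_eq [NoZeroDivisors R] [DecidableEq σ] {p q : MvPolynomial σ R}
    (hp : p ≠ 0) (hq : q ≠ 0) : (p * q).vars = p.vars ∪ q.vars := by
  ext i
  simp only [Finset.mem_union, mem_vars_iff_degreeOf_ne_zero, degreeOf_mul_eq hp hq]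
  omega

theorem totalDegree_C_mul_le (a : R) (p : MvPolynomial σ R) :
    (C a * p).totalDegree ≤ p.totalDegree :=
  (totalDegree_mul _ _).trans (by rw [totalDegree_C, zero_add])

end CommSemiring

section CommRing

variable {R σ : Type*} [CommRing R]

theorem totalDegree_mul_sub_C_coeff_zero_le {p q : MvPolynomial σ R} {d e : ℕ}
    (hp : (p - C (p.coeff 0)).totalDegree ≤ d) (hq : q.totalDegree ≤ e) :
    (p * q - C ((p * q).coeff 0)).totalDegree ≤ d + e := by
  have hsplit : p * q - C ((p * q).coeff 0)
      = C (p.coeff 0) * (q - C (q.coeff 0)) + (p - C (p.coeff 0)) * q := by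
    rw [← constantCoeff_eq, map_mul, constantCoeff_eq, C_mul]
    ring
  rw [hsplit]
  refine (totalDegree_add _ _).trans (max_le ?_ ?_)
  · calc _ ≤ (q - C (q.coeff 0)).totalDegree := totalDegree_C_mul_le _ _
      _ ≤ q.totalDegree := totalDegree_sub_C_le _ _
      _ ≤ d + e := by omega
  · exact (totalDegree_mul _ _).trans (add_le_add hp hq)

theorem totalDegree_C_mul_add_C_sub_C_coeff_zero_le (a b : R) (p : MvPolynomial σ R) :
    (C a * p + C b - C ((C a * p + C b).coeff 0)).totalDegree
      ≤ (p - C (p.coeff 0)).totalDegree := by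
  classical
  have hsplit : C a * p + C b - C ((C a * p + C b).coeff 0) = C a * (p - C (p.coeff 0)) := by
    rw [coeff_add, coeff_C_mul, coeff_C, if_pos rfl, C_add, C_mul]
    ring
  rw [hsplit]
  exact totalDegree_C_mul_le _ _

end CommRing

end MvPolynomial

open MvPolynomial

section Restriction

variable {F : Type*} [Field F] {n : ℕ}

theorem rst_of_notMem_vars {i : Fin n} {c : F} {p : MvPolynomial (Fin n) F} (h : i ∉ p.vars) :
    rst i c p = p := by
  conv_rhs => rw [← aeval_X_left_apply p]
  exact eval₂Hom_congr' rfl (fun j hj _ => if_neg (ne_of_mem_of_not_mem hj h)) rfl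

theorem rst_C_mul_X_self (a : F) (i : Fin n) : rst i 0 (C a * X i) = 0 := by
  simp [rst]

theorem rst_C_mul_mul_add_C (i : Fin n) (c a b : F) (f g : MvPolynomial (Fin n) F) :
    rst i c (C a * (f * g) + C b) = C a * (rst i c f * rst i c g) + C b := by
  simp only [rst, map_add, map_mul, aeval_C, algebraMap_eq]

end Restriction

namespace IsMulROP0

variable {F : Type*} [Field F] {n : ℕ} {f g : MvPolynomial (Fin n) F}

theorem vars_nonempty (hf : IsMulROP0 f) : f.vars.Nonempty := by
  induction hf with
  | leaf a ha i => simp [vars_C_mul _ ha, vars_X]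
  | mul a b ha hdisj hf hg ihf ihg =>
    rw [vars_add_C, vars_C_mul _ ha, vars_mul_eq (by rintro rfl; simp at ihf)
      (by rintro rfl; simp at ihg)]
    exact ihf.mono Finset.subset_union_left

theorem ne_zero (hf : IsMulROP0 f) : f ≠ 0 := by
  rintro rfl
  simpa using hf.vars_nonempty

theorem vars_node (hf : IsMulROP0 f) (hg : IsMulROP0 g) {a : F} (ha : a ≠ 0) (b : F) :
    (C a * (f * g) + C b).vars = f.vars ∪ g.vars := by
  rw [vars_add_C, vars_C_mul _ ha, vars_mul_eq hf.ne_zero hg.ne_zero]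

theorem card_vars_node (hf : IsMulROP0 f) (hg : IsMulROP0 g) (hdisj : Disjoint f.vars g.vars)
    {a : F} (ha : a ≠ 0) (b : F) :
    (C a * (f * g) + C b).vars.card = f.vars.card + g.vars.card := by
  rw [vars_node hf hg ha, Finset.card_union_of_disjoint hdisj]

theorem totalDegree_le_card_vars (hf : IsMulROP0 f) : f.totalDegree ≤ f.vars.card := by
  induction hf with
  | leaf a ha i =>
    rw [vars_C_mul _ ha, vars_X, Finset.card_singleton]
    exact (totalDegree_C_mul_le _ _).trans (totalDegree_X _).le
  | mul a b ha hdisj hf hg ihf ihg =>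
    rw [hf.card_vars_node hg hdisj ha]
    refine (totalDegree_add _ _).trans (max_le ?_ (by simp))
    exact (totalDegree_C_mul_le _ _).trans ((totalDegree_mul _ _).trans (add_le_add ihf ihg))

theorem rst_zero_eq_zero_or_two_le_card_vars (hf : IsMulROP0 f) {x : Fin n} (hx : x ∈ f.vars) :
    rst x 0 f = 0 ∨ 2 ≤ f.vars.card := by
  cases hf with
  | leaf a ha i =>
    obtain rfl : x = i := by simpa [vars_C_mul _ ha, vars_X] using hx
    exact .inl (rst_C_mul_X_self a x)
  | mul a b ha hdisj hf hg =>
    rw [hf.card_vars_node hg hdisj ha]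
    have := hf.vars_nonempty.card_pos
    have := hg.vars_nonempty.card_pos
    exact .inr (by omega)

theorem totalDegree_rst_zero_node_le (hf : IsMulROP0 f) (hg : IsMulROP0 g)
    (hdisj : Disjoint f.vars g.vars) {a : F} (ha : a ≠ 0) (b : F) {x : Fin n} (hx : x ∈ f.vars)
    (ihf : (rst x 0 f - C ((rst x 0 f).coeff 0)).totalDegree ≤ f.vars.card - 2) :
    (rst x 0 (C a * (f * g) + C b) - C ((rst x 0 (C a * (f * g) + C b)).coeff 0)).totalDegree
      ≤ (C a * (f * g) + C b).vars.card - 2 := by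
  rw [rst_C_mul_mul_add_C, rst_of_notMem_vars (Finset.disjoint_left.mp hdisj hx),
    hf.card_vars_node hg hdisj ha]
  refine (totalDegree_C_mul_add_C_sub_C_coeff_zero_le _ _ _).trans ?_
  rcases hf.rst_zero_eq_zero_or_two_le_card_vars hx with hzero | htwo
  · simp [hzero]
  · calc _ ≤ f.vars.card - 2 + g.vars.card :=
          totalDegree_mul_sub_C_coeff_zero_le ihf hg.totalDegree_le_card_vars
      _ = _ := by omega

theorem totalDegree_rst_zero_sub_C_le (hf : IsMulROP0 f) {x : Fin n} (hx : x ∈ f.vars) :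
    (rst x 0 f - C ((rst x 0 f).coeff 0)).totalDegree ≤ f.vars.card - 2 := by
  induction hf generalizing x with
  | leaf a ha i =>
    obtain rfl : x = i := by simpa [vars_C_mul _ ha, vars_X] using hx
    simp [rst_C_mul_X_self]
  | @mul a b ha f g hdisj hf hg ihf ihg =>
    rcases Finset.mem_union.mp (hf.vars_node hg ha b ▸ hx) with hxf | hxg
    · exact totalDegree_rst_zero_node_le hf hg hdisj ha b hxf (ihf hxf)
    · rw [mul_comm f g]
      exact totalDegree_rst_zero_node_le hg hf hdisj.symm ha b hxg (ihg hxg)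

end IsMulROP0

theorem stmt14_general {F : Type*} [Field F] {N : ℕ} (g : MvPolynomial (Fin N) F) {n : ℕ}
    (hg : IsMulROP0 g) (hn : g.vars.card = n)
    (x : Fin N) (hx : x ∈ g.vars) :
    (rst x 0 g - C ((rst x 0 g).coeff 0)).totalDegree ≤ n - 2 :=
  hn ▸ hg.totalDegree_rst_zero_sub_C_le hx

theorem stmt14 {F : Type*} [Field F] {N : ℕ} (g : MvPolynomial (Fin N) F) {n : ℕ}
    (hg : IsMulROP0 g) (hn : g.vars.card = n) (hn2 : 2 ≤ n)
    (x : Fin N) (hx : x ∈ g.vars) :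
    (rst x 0 g - C ((rst x 0 g).coeff 0)).totalDegree ≤ n - 2 :=
  stmt14_general g hg hn x hx
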